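/- On a Polish space X, the KL divergence KL(μ‖ν) is lower semi-continuous in the pair (μ,ν) with respect to weak convergence: if μ_n → μ and ν_n → ν weakly, then liminf_{n→∞} KL(μ_n‖ν_n) ≥ KL(μ‖ν). -/

import Mathlib

open MeasureTheory Real ENNReal Filter Topology
open scoped Classical

noncomputable def klDiv {X : Type*} [MeasurableSpace X] (μ ν : Measure X) : EReal :=
  if μ ≪ ν ∧ Integrable (fun x => Real.log (μ.rnDeriv ν x).toReal) μ
  then ((∫ x, Real.log (μ.rnDeriv ν x).toReal ∂μ : ℝ) : EReal)
  else ⊤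

noncomputable def tvDist {X : Type*} [MeasurableSpace X] (μ ν : Measure X) : ℝ :=
  ⨆ A : {A : Set X // MeasurableSet A}, |(μ A).toReal - (ν A).toReal|

/-!
Everything rests on the variational formula
`KL(μ‖ν) = ⨆ g, ∫ g dμ - ∫ (e^g - 1) dν` over bounded continuous `g`: each functional on the right
is weakly continuous in `(μ, ν)`, so their supremum is lower semicontinuous.

The inequality `≥` integrates the Fenchel–Young inequality `r t - (e^t - 1) ≤ r log r + 1 - r`
against `ν`, with `r = dμ/dν`. For `≤`, indicators of `ν`-null sets force `μ ≪ ν` when the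
supremum is finite; the logarithms of `dμ/dν` truncated to `[e^{-n}, e^n]` then give objectives
whose integrands are nonnegative and converge to `r log r + 1 - r`, so Fatou's lemma gives the
bound over bounded measurable `g`. Those are a.e. limits of uniformly bounded continuous functions
(bounded continuous functions are dense in `L¹(μ + ν)`), and dominated convergence finishes.
-/

open scoped BoundedContinuousFunction
open InformationTheory (klFun klFun_apply klFun_nonneg)

lemma mul_sub_exp_sub_one_le_klFun {r : ℝ} (hr : 0 ≤ r) (t : ℝ) :
    r * t - (exp t - 1) ≤ klFun r := by
  rw [klFun_apply]
  rcases hr.eq_or_lt with rfl | hr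
  · simp [(exp_pos t).le]
  · have h := mul_le_mul_of_nonneg_left (add_one_le_exp (t - log r)) hr.le
    rw [exp_sub, exp_log hr, mul_div_cancel₀ _ hr.ne'] at h
    linarith

lemma mul_log_sub_sub_one_nonneg {r s : ℝ} (hs : 0 ≤ s) (hsr : s ∈ Set.uIcc 1 r) :
    0 ≤ r * log s - (s - 1) := by
  have hkl : 0 ≤ s * log s + 1 - s := by simpa [klFun_apply] using klFun_nonneg hs
  have hmul : 0 ≤ (r - s) * log s := by
    rcases Set.mem_uIcc.1 hsr with ⟨h1, h2⟩ | ⟨h1, h2⟩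
    · exact mul_nonneg (by linarith) (log_nonneg h1)
    · exact mul_nonneg_of_nonpos_of_nonpos (by linarith) (log_nonpos hs h2)
  linarith

lemma abs_exp_sub_one_le {t C : ℝ} (h : |t| ≤ C) : |exp t - 1| ≤ exp C + 1 := by
  have := exp_le_exp.2 (abs_le.1 h).2
  rw [abs_le]
  constructor <;> linarith [exp_pos t]

noncomputable def truncDensity (n : ℕ) (r : ℝ) : ℝ := max (min r (exp n)) (exp (-n))

lemma truncDensity_pos (n : ℕ) (r : ℝ) : 0 < truncDensity n r :=
  (exp_pos _).trans_le (le_max_right _ _)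

lemma continuous_truncDensity (n : ℕ) : Continuous (truncDensity n) :=
  (continuous_id.min continuous_const).max continuous_const

lemma abs_log_truncDensity_le (n : ℕ) (r : ℝ) : |log (truncDensity n r)| ≤ n := by
  have hpos := truncDensity_pos n r
  rw [abs_le, le_log_iff_exp_le hpos, log_le_iff_le_exp hpos, truncDensity]
  exact ⟨le_max_right _ _, max_le (min_le_right _ _) (exp_le_exp.2 (by simp))⟩

lemma truncDensity_mem_uIcc (n : ℕ) (r : ℝ) : truncDensity n r ∈ Set.uIcc 1 r := by
  have h1 : exp (-n : ℝ) ≤ 1 := exp_le_one_iff.2 (by simp)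
  have h2 : 1 ≤ exp (n : ℝ) := one_le_exp (by simp)
  rw [Set.mem_uIcc, truncDensity]
  rcases le_total 1 r with hr | hr
  · left
    rw [max_eq_left (h1.trans (le_min hr h2))]
    exact ⟨le_min hr h2, min_le_left _ _⟩
  · right
    rw [min_eq_left (hr.trans h2)]
    exact ⟨le_max_left _ _, max_le hr h1⟩

lemma tendsto_truncDensity {r : ℝ} (hr : 0 ≤ r) :
    Tendsto (fun n => truncDensity n r) atTop (𝓝 r) := by
  have hmin : ∀ᶠ n : ℕ in atTop, min r (exp n) = r :=
    ((tendsto_exp_atTop.comp tendsto_natCast_atTop_atTop).eventually_ge_atTop r).mono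
      fun n hn => min_eq_left hn
  have hmax : Tendsto (fun n : ℕ => max r (exp (-n))) atTop (𝓝 (max r 0)) :=
    tendsto_const_nhds.max (tendsto_exp_neg_atTop_nhds_zero.comp tendsto_natCast_atTop_atTop)
  rw [max_eq_left hr] at hmax
  exact hmax.congr' (hmin.mono fun n hn => by simp only [truncDensity, hn])

lemma tendsto_mul_log_truncDensity {r : ℝ} (hr : 0 ≤ r) :
    Tendsto (fun n => r * log (truncDensity n r) - (truncDensity n r - 1)) atTop
      (𝓝 (klFun r)) := by
  rw [klFun_apply, add_sub_right_comm, sub_add]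
  have htr := tendsto_truncDensity hr
  refine Tendsto.sub ?_ (htr.sub_const 1)
  rcases hr.eq_or_lt with rfl | hr
  · simp
  · exact htr.log hr.ne' |>.const_mul r

section Objective

variable {X : Type*} [MeasurableSpace X] {μ ν : Measure X} {f : X → ℝ}

/-- `t ↦ e^t - 1` is the convex conjugate of `klFun`. -/
noncomputable def klDualObjective (μ ν : Measure X) (f : X → ℝ) : ℝ :=
  ∫ x, f x ∂μ - ∫ x, (exp (f x) - 1) ∂ν

lemma integrable_exp_of_abs_le [IsFiniteMeasure μ] (hf : Measurable f) {C : ℝ}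
    (hC : ∀ x, |f x| ≤ C) : Integrable (fun x => exp (f x)) μ :=
  .of_bound (by fun_prop) (exp C) (ae_of_all _ fun x => by
    rw [norm_eq_abs, abs_of_pos (exp_pos _)]
    exact exp_le_exp.2 (abs_le.1 (hC x)).2)

lemma klDualObjective_eq_integral [IsFiniteMeasure μ] [IsFiniteMeasure ν] (hac : μ ≪ ν)
    (hfμ : Integrable f μ) (hfν : Integrable (fun x => exp (f x)) ν) :
    klDualObjective μ ν f = ∫ x, ((μ.rnDeriv ν x).toReal * f x - (exp (f x) - 1)) ∂ν := by
  rw [klDualObjective, ← integral_toReal_rnDeriv_mul hac]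
  exact (integral_sub ((integrable_toReal_rnDeriv_mul_iff hac).2 hfμ)
    (hfν.sub (integrable_const 1))).symm

lemma ofReal_klDualObjective_le_klDiv [IsFiniteMeasure μ] [IsFiniteMeasure ν]
    (hfμ : Integrable f μ) (hfν : Integrable (fun x => exp (f x)) ν) :
    ENNReal.ofReal (klDualObjective μ ν f) ≤ InformationTheory.klDiv μ ν := by
  by_cases htop : InformationTheory.klDiv μ ν = ∞
  · exact htop ▸ le_top
  obtain ⟨hac, hllr⟩ := InformationTheory.klDiv_ne_top_iff.1 htop
  rw [InformationTheory.klDiv_eq_integral_klFun, if_pos ⟨hac, hllr⟩,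
    klDualObjective_eq_integral hac hfμ hfν]
  refine ENNReal.ofReal_le_ofReal (integral_mono ?_ ?_ fun x => ?_)
  · exact ((integrable_toReal_rnDeriv_mul_iff hac).2 hfμ).sub (hfν.sub (integrable_const 1))
  · exact (InformationTheory.integrable_klFun_rnDeriv_iff hac).2 hllr
  · exact mul_sub_exp_sub_one_le_klFun ENNReal.toReal_nonneg _

lemma absolutelyContinuous_of_forall_klDualObjective_le [IsFiniteMeasure μ] {c : ℝ}
    (h : ∀ f : X → ℝ, Measurable f → (∃ C, ∀ x, |f x| ≤ C) → klDualObjective μ ν f ≤ c) :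
    μ ≪ ν := by
  refine Measure.AbsolutelyContinuous.mk fun s hs hνs => ?_
  by_contra hμs
  have hpos : 0 < μ.real s := ENNReal.toReal_pos hμs (measure_ne_top μ s)
  set t := (c + 1) / μ.real s
  have hobj : klDualObjective μ ν (s.indicator fun _ => t) = t * μ.real s := by
    have hν0 : ∫ x, (exp (s.indicator (fun _ => t) x) - 1) ∂ν = 0 := by
      refine integral_eq_zero_of_ae ?_
      filter_upwards [measure_eq_zero_iff_ae_notMem.1 hνs] with x hx
      simp [Set.indicator_of_notMem hx]
    rw [klDualObjective, hν0, integral_indicator_const _ hs, smul_eq_mul, mul_comm, sub_zero]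
  have hbd : ∀ x, |s.indicator (fun _ => t) x| ≤ |t| := fun x => by
    by_cases hx : x ∈ s <;> simp [hx]
  have := h _ (measurable_const.indicator hs) ⟨|t|, hbd⟩
  rw [hobj, div_mul_cancel₀ _ hpos.ne'] at this
  linarith

lemma measurable_log_truncDensity_rnDeriv (μ ν : Measure X) (n : ℕ) :
    Measurable fun x => log (truncDensity n (μ.rnDeriv ν x).toReal) :=
  ((continuous_truncDensity n).measurable.comp (μ.measurable_rnDeriv ν).ennreal_toReal).log

lemma ofReal_klDualObjective_log_truncDensity [IsFiniteMeasure μ] [IsFiniteMeasure ν]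
    (hac : μ ≪ ν) (n : ℕ) :
    ENNReal.ofReal (klDualObjective μ ν fun x => log (truncDensity n (μ.rnDeriv ν x).toReal)) =
      ∫⁻ x, .ofReal ((μ.rnDeriv ν x).toReal * log (truncDensity n (μ.rnDeriv ν x).toReal) -
        (truncDensity n (μ.rnDeriv ν x).toReal - 1)) ∂ν := by
  have hF := measurable_log_truncDensity_rnDeriv μ ν n
  have hFC : ∀ x, |log (truncDensity n (μ.rnDeriv ν x).toReal)| ≤ n :=
    fun x => abs_log_truncDensity_le n _
  have hFμ : Integrable _ μ := .of_bound hF.aestronglyMeasurable n (ae_of_all _ hFC)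
  have hFν := integrable_exp_of_abs_le (μ := ν) hF hFC
  rw [klDualObjective_eq_integral hac hFμ hFν]
  simp only [exp_log (truncDensity_pos n _)] at hFν ⊢
  exact ofReal_integral_eq_lintegral_ofReal
    (((integrable_toReal_rnDeriv_mul_iff hac).2 hFμ).sub (hFν.sub (integrable_const 1)))
    (ae_of_all _ fun x =>
      mul_log_sub_sub_one_nonneg (truncDensity_pos n _).le (truncDensity_mem_uIcc n _))

lemma klDiv_le_of_forall_klDualObjective_le [IsFiniteMeasure μ] [IsFiniteMeasure ν] {c : ℝ≥0∞}
    (h : ∀ f : X → ℝ, Measurable f → (∃ C, ∀ x, |f x| ≤ C) →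
      ENNReal.ofReal (klDualObjective μ ν f) ≤ c) :
    InformationTheory.klDiv μ ν ≤ c := by
  rcases eq_top_or_lt_top c with rfl | hc
  · exact le_top
  have hac : μ ≪ ν := absolutelyContinuous_of_forall_klDualObjective_le (c := c.toReal)
    fun f hf hC => (ENNReal.ofReal_le_iff_le_toReal hc.ne).1 (h f hf hC)
  set r : X → ℝ := fun x => (μ.rnDeriv ν x).toReal
  have hr : Measurable r := (μ.measurable_rnDeriv ν).ennreal_toReal
  set φ : ℕ → X → ℝ := fun n x => r x * log (truncDensity n (r x)) - (truncDensity n (r x) - 1)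
  rw [InformationTheory.klDiv_eq_lintegral_klFun_of_ac hac]
  calc ∫⁻ x, .ofReal (klFun (r x)) ∂ν = ∫⁻ x, liminf (fun n => .ofReal (φ n x)) atTop ∂ν :=
        lintegral_congr fun x => (((ENNReal.continuous_ofReal.tendsto _).comp
          (tendsto_mul_log_truncDensity ENNReal.toReal_nonneg)).liminf_eq).symm
    _ ≤ liminf (fun n => ∫⁻ x, .ofReal (φ n x) ∂ν) atTop :=
        lintegral_liminf_le fun n => ((hr.mul (measurable_log_truncDensity_rnDeriv μ ν n)).sub
          (((continuous_truncDensity n).measurable.comp hr).sub_const 1)).ennreal_ofReal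
    _ ≤ c := liminf_le_of_frequently_le' (.of_forall fun n =>
        ofReal_klDualObjective_log_truncDensity hac n ▸
          h _ (measurable_log_truncDensity_rnDeriv μ ν n) ⟨n, fun x => abs_log_truncDensity_le n _⟩)

lemma tendsto_klDualObjective_of_ae_tendsto [IsFiniteMeasure μ] [IsFiniteMeasure ν]
    {F : ℕ → X → ℝ} {C : ℝ} (hF : ∀ n, Measurable (F n)) (hC : ∀ n x, |F n x| ≤ C)
    (hμ : ∀ᵐ x ∂μ, Tendsto (fun n => F n x) atTop (𝓝 (f x)))
    (hν : ∀ᵐ x ∂ν, Tendsto (fun n => F n x) atTop (𝓝 (f x))) :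
    Tendsto (fun n => klDualObjective μ ν (F n)) atTop (𝓝 (klDualObjective μ ν f)) := by
  refine .sub (tendsto_integral_of_dominated_convergence (fun _ => C)
    (fun n => (hF n).aestronglyMeasurable) (integrable_const C) (fun n => ae_of_all _ (hC n)) hμ)
    (tendsto_integral_of_dominated_convergence (fun _ => exp C + 1)
    (fun n => ((hF n).exp.sub_const 1).aestronglyMeasurable) (integrable_const _)
    (fun n => ae_of_all _ fun x => abs_exp_sub_one_le (hC n x))
    (hν.mono fun x hx => hx.rexp.sub_const 1))

end Objective

section Approximation

variable {X : Type*} [TopologicalSpace X] [MeasurableSpace X] [BorelSpace X]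

lemma MeasureTheory.Integrable.exists_seq_boundedContinuous_tendsto_ae [NormalSpace X]
    {E : Type*} [NormedAddCommGroup E] [NormedSpace ℝ E] {ρ : Measure X} [ρ.WeaklyRegular]
    {f : X → E} (hf : Integrable f ρ) :
    ∃ g : ℕ → X →ᵇ E, ∀ᵐ x ∂ρ, Tendsto (fun n => g n x) atTop (𝓝 (f x)) := by
  choose g hg hgLp using fun n : ℕ =>
    (memLp_one_iff_integrable.2 hf).exists_boundedContinuous_eLpNorm_sub_le one_ne_top
      (ENNReal.inv_ne_zero.2 (natCast_ne_top n))
  have hlim : Tendsto (fun n => eLpNorm (⇑(g n) - f) 1 ρ) atTop (𝓝 0) :=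
    tendsto_of_tendsto_of_tendsto_of_le_of_le tendsto_const_nhds ENNReal.tendsto_inv_nat_nhds_zero
      (fun _ => zero_le) fun n => eLpNorm_sub_comm f (g n) 1 ρ ▸ hg n
  obtain ⟨ns, -, hns⟩ := (tendstoInMeasure_of_tendsto_eLpNorm one_ne_zero
    (fun n => (hgLp n).aestronglyMeasurable) hf.aestronglyMeasurable hlim).exists_seq_tendsto_ae
  exact ⟨g ∘ ns, hns⟩

variable [TopologicalSpace.PseudoMetrizableSpace X] {μ ν : Measure X}
  [IsFiniteMeasure μ] [IsFiniteMeasure ν]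

lemma ofReal_klDualObjective_le_of_forall_boundedContinuous {c : ℝ≥0∞}
    (h : ∀ g : X →ᵇ ℝ, ENNReal.ofReal (klDualObjective μ ν g) ≤ c) {f : X → ℝ}
    (hf : Measurable f) {C : ℝ} (hC : ∀ x, |f x| ≤ C) :
    ENNReal.ofReal (klDualObjective μ ν f) ≤ c := by
  obtain ⟨g, hg⟩ := (Integrable.of_bound hf.aestronglyMeasurable C (ae_of_all (μ + ν) hC)
    ).exists_seq_boundedContinuous_tendsto_ae
  -- clamping to `[-|C|, |C|]` makes the approximants uniformly bounded and does not move `f`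
  set clamp : ℝ → ℝ := fun y => max (min y |C|) (-|C|)
  have hclamp : Continuous clamp := (continuous_id.min continuous_const).max continuous_const
  have hclamp_f : ∀ x, clamp (f x) = f x := fun x => by
    have := abs_le.1 ((hC x).trans (le_abs_self C))
    simp only [clamp, min_eq_left this.2, max_eq_left this.1]
  set G : ℕ → X →ᵇ ℝ := fun n => g n ⊓ .const X |C| ⊔ .const X (-|C|)
  have hG : ∀ n x, G n x = clamp (g n x) := fun n x => rfl
  have hGC : ∀ n x, |G n x| ≤ |C| := fun n x => by
    rw [hG, abs_le]
    exact ⟨le_max_right _ _, max_le (min_le_right _ _) (by simp)⟩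
  have hlim : ∀ᵐ x ∂(μ + ν), Tendsto (fun n => G n x) atTop (𝓝 (f x)) :=
    hg.mono fun x hx => hclamp_f x ▸ (hclamp.tendsto _).comp hx
  rw [ae_add_measure_iff] at hlim
  exact le_of_tendsto' ((ENNReal.continuous_ofReal.tendsto _).comp
    (tendsto_klDualObjective_of_ae_tendsto (fun n => (G n).continuous.measurable) hGC
      hlim.1 hlim.2)) fun n => h (G n)

end Approximation

section Weak

variable {X : Type*} [TopologicalSpace X] [MeasurableSpace X] [BorelSpace X]

lemma continuous_klDualObjective (g : X →ᵇ ℝ) :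
    Continuous fun p : ProbabilityMeasure X × ProbabilityMeasure X =>
      klDualObjective (p.1 : Measure X) p.2 g := by
  let e : X →ᵇ ℝ := .ofNormedAddCommGroup (fun x => exp (g x) - 1) (by fun_prop) (exp ‖g‖ + 1)
    fun x => abs_exp_sub_one_le (g.norm_coe_le_norm x)
  exact ((ProbabilityMeasure.continuous_integral_boundedContinuousFunction g).comp
    continuous_fst).sub
    ((ProbabilityMeasure.continuous_integral_boundedContinuousFunction e).comp continuous_snd)

variable [TopologicalSpace.PseudoMetrizableSpace X]

theorem klDiv_eq_iSup_klDualObjective (μ ν : Measure X) [IsFiniteMeasure μ] [IsFiniteMeasure ν] :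
    InformationTheory.klDiv μ ν = ⨆ g : X →ᵇ ℝ, ENNReal.ofReal (klDualObjective μ ν g) :=
  le_antisymm
    (klDiv_le_of_forall_klDualObjective_le fun _ hf ⟨_, hC⟩ =>
      ofReal_klDualObjective_le_of_forall_boundedContinuous (fun g => le_iSup_of_le g le_rfl) hf hC)
    (iSup_le fun g => ofReal_klDualObjective_le_klDiv (g.integrable μ)
      (integrable_exp_of_abs_le g.continuous.measurable g.norm_coe_le_norm))

theorem lowerSemicontinuous_klDiv :
    LowerSemicontinuous fun p : ProbabilityMeasure X × ProbabilityMeasure X =>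
      InformationTheory.klDiv (p.1 : Measure X) p.2 := by
  simp_rw [klDiv_eq_iSup_klDualObjective]
  exact lowerSemicontinuous_iSup fun g =>
    (ENNReal.continuous_ofReal.comp (continuous_klDualObjective g)).lowerSemicontinuous

end Weak

lemma klDiv_eq_coe_klDiv {X : Type*} [MeasurableSpace X] (μ ν : Measure X)
    [IsProbabilityMeasure μ] [IsProbabilityMeasure ν] :
    klDiv μ ν = (InformationTheory.klDiv μ ν : EReal) := by
  change (if μ ≪ ν ∧ Integrable (llr μ ν) μ then ((∫ x, llr μ ν x ∂μ : ℝ) : EReal) else ⊤) = _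
  split_ifs with h
  · have hnonneg := InformationTheory.integral_llr_add_sub_measure_univ_nonneg h.1 h.2
    rw [InformationTheory.klDiv_of_ac_of_integrable h.1 h.2, EReal.coe_ennreal_ofReal,
      max_eq_left hnonneg]
    simp
  · rw [InformationTheory.klDiv_eq_top_iff.2 fun hac hint => h ⟨hac, hint⟩]
    rfl

theorem kl_lowerSemicontinuous {X : Type*} [MeasurableSpace X] [TopologicalSpace X]
    [PolishSpace X] [BorelSpace X]
    (μs νs : ℕ → ProbabilityMeasure X) (μ ν : ProbabilityMeasure X)
    (hμ : Tendsto μs atTop (𝓝 μ)) (hν : Tendsto νs atTop (𝓝 ν)) :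
    klDiv μ.toMeasure ν.toMeasure ≤
      liminf (fun n => klDiv (μs n).toMeasure (νs n).toMeasure) atTop := by
  have hlsc := continuous_coe_ennreal_ereal.comp_lowerSemicontinuous
    (lowerSemicontinuous_klDiv (X := X))
    fun _ _ h => EReal.coe_ennreal_le_coe_ennreal_iff.2 h
  simp only [klDiv_eq_coe_klDiv]
  exact (hlsc.le_liminf (μ, ν)).trans (hμ.prodMk_nhds hν).liminf_le_liminf_comp
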